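/- arXiv:2109.09164 — 2 statements merged into one kernel-verified Lean document; each statement's English description precedes it below -/
import Mathlib

section
/- Let $h_1, h_2 : \mathbb{R}^n \to \mathbb{R}$ be continuous nonnegative functions, with $h_1$ coercive. For a sequence $\delta_m \to 0^+$, let $\hat\theta_m$ minimize $h_1 + \delta_m h_2$. Then every limit point $\theta^*$ of $(\hat\theta_m)$ satisfies $h_1(\theta^*) = \min_v h_1(v)$ and $h_2(\theta^*) \leq h_2(\theta)$ for every $\theta$ with $h_1(\theta) = \min_v h_1(v)$; i.e., $\theta^*$ solves $\min h_2$ subject to $h_1(\theta) = \min_v h_1(v)$. -/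
open Filter Topology

theorem stmt_3 {n : ℕ} (h1 h2 : (Fin n → ℝ) → ℝ)
    (hc1 : Continuous h1) (hc2 : Continuous h2)
    (h1nonneg : ∀ θ, 0 ≤ h1 θ) (h2nonneg : ∀ θ, 0 ≤ h2 θ)
    (hcoercive : Tendsto h1 (Bornology.cobounded (Fin n → ℝ)) atTop)
    (δ : ℕ → ℝ) (hδpos : ∀ m, 0 < δ m) (hδ : Tendsto δ atTop (𝓝 0))
    (θhat : ℕ → (Fin n → ℝ))
    (hmin : ∀ m θ, h1 (θhat m) + δ m * h2 (θhat m) ≤ h1 θ + δ m * h2 θ)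
    (θstar : Fin n → ℝ) (φ : ℕ → ℕ) (hφ : StrictMono φ)
    (hlim : Tendsto (fun m => θhat (φ m)) atTop (𝓝 θstar)) :
    h1 θstar = (⨅ v, h1 v) ∧
      ∀ θ, h1 θ = (⨅ v, h1 v) → h2 θstar ≤ h2 θ := by
  have hbdd : BddBelow (Set.range h1) := ⟨0, by rintro x ⟨v, rfl⟩; exact h1nonneg v⟩
  set c := ⨅ v, h1 v with hc
  have hcle : ∀ θ, c ≤ h1 θ := fun θ => ciInf_le hbdd θ
  have hδφ : Tendsto (fun m => δ (φ m)) atTop (𝓝 0) := hδ.comp hφ.tendsto_atTop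
  have h1lim : Tendsto (fun m => h1 (θhat (φ m))) atTop (𝓝 (h1 θstar)) :=
    (hc1.tendsto θstar).comp hlim
  have h2lim : Tendsto (fun m => h2 (θhat (φ m))) atTop (𝓝 (h2 θstar)) :=
    (hc2.tendsto θstar).comp hlim
  have key : ∀ θ, h1 θstar ≤ h1 θ := by
    intro θ
    have hT : Tendsto (fun m => h1 θ + δ (φ m) * h2 θ) atTop (𝓝 (h1 θ + 0 * h2 θ)) :=
      tendsto_const_nhds.add (hδφ.mul tendsto_const_nhds)
    rw [zero_mul, add_zero] at hT
    refine le_of_tendsto_of_tendsto h1lim hT (Eventually.of_forall fun m => ?_)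
    calc h1 (θhat (φ m)) ≤ h1 (θhat (φ m)) + δ (φ m) * h2 (θhat (φ m)) :=
          le_add_of_nonneg_right (mul_nonneg (hδpos _).le (h2nonneg _))
      _ ≤ h1 θ + δ (φ m) * h2 θ := hmin _ _
  have hstar : h1 θstar = c := le_antisymm (le_ciInf key) (hcle θstar)
  refine ⟨hstar, fun θ hθ => ?_⟩
  refine le_of_tendsto_of_tendsto h2lim tendsto_const_nhds (Eventually.of_forall fun m => ?_)
  have h := hmin (φ m) θ
  rw [hθ] at h
  have hc1le : c ≤ h1 (θhat (φ m)) := hcle _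
  have hmul : δ (φ m) * h2 (θhat (φ m)) ≤ δ (φ m) * h2 θ := by linarith
  exact le_of_mul_le_mul_left hmul (hδpos (φ m))
end

section
/- Let $h_1, h_2 : \mathbb{R}^n \to \mathbb{R}$ be continuous, nonnegative, with $h_1 + h_2$ coercive. Suppose $h_1$ has a unique minimizer $\theta_1^*$. For $\eta_m \to 1^-$ let $\hat\theta_m$ minimize $\eta_m h_1 + (1-\eta_m) h_2$. Then $\hat\theta_m \to \theta_1^*$. -/
open Filter Topology

theorem stmt_18 {n : ℕ} (h1 h2 : (Fin n → ℝ) → ℝ)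
    (hc1 : Continuous h1) (hc2 : Continuous h2)
    (h1nonneg : ∀ θ, 0 ≤ h1 θ) (h2nonneg : ∀ θ, 0 ≤ h2 θ)
    (hcoercive : Tendsto (fun θ => h1 θ + h2 θ)
      (Bornology.cobounded (Fin n → ℝ)) atTop)
    (θ1star : Fin n → ℝ)
    (hθ1min : ∀ v, h1 θ1star ≤ h1 v)
    (hθ1uniq : ∀ θ, (∀ v, h1 θ ≤ h1 v) → θ = θ1star)
    (η : ℕ → ℝ) (hη : ∀ m, η m ∈ Set.Ioo (0 : ℝ) 1)
    (hηlim : Tendsto η atTop (𝓝 1))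
    (θhat : ℕ → (Fin n → ℝ))
    (hmin : ∀ m θ, η m * h1 (θhat m) + (1 - η m) * h2 (θhat m) ≤
      η m * h1 θ + (1 - η m) * h2 θ) :
    Tendsto θhat atTop (𝓝 θ1star) := by
  set B : ℝ := h1 θ1star + 2 * h2 θ1star with hB
  -- eventually η m ≥ 1/2
  have hhalf : ∀ᶠ m in atTop, (1/2 : ℝ) ≤ η m :=
    hηlim.eventually (eventually_ge_nhds (by norm_num))
  -- eventually θhat m lies in the sublevel set S
  have hS : ∀ᶠ m in atTop, h1 (θhat m) + h2 (θhat m) ≤ B := by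
    filter_upwards [hhalf] with m hm
    have hη0 := (hη m).1
    have hη1 := (hη m).2
    have key := hmin m θ1star
    have h1le := hθ1min (θhat m)
    have h2le : h2 (θhat m) ≤ h2 θ1star := by nlinarith
    have h1le' : h1 (θhat m) ≤ h1 θ1star + h2 θ1star := by
      have hmul : η m * h1 (θhat m) ≤ η m * (h1 θ1star + h2 θ1star) := by
        nlinarith [mul_nonneg (by linarith : (0:ℝ) ≤ 2 * η m - 1) (h2nonneg θ1star),
          mul_nonneg (by linarith : (0:ℝ) ≤ 1 - η m) (h2nonneg (θhat m))]
      exact le_of_mul_le_mul_left hmul hη0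
    simp only [hB]; linarith
  -- S is compact
  have hSclosed : IsClosed {θ : Fin n → ℝ | h1 θ + h2 θ ≤ B} :=
    isClosed_le (by fun_prop) continuous_const
  have hSbdd : Bornology.IsBounded {θ : Fin n → ℝ | h1 θ + h2 θ ≤ B} := by
    have hev : ∀ᶠ θ in Bornology.cobounded (Fin n → ℝ), B + 1 ≤ h1 θ + h2 θ :=
      hcoercive.eventually_ge_atTop (B + 1)
    rw [Filter.eventually_iff, ← Bornology.isCobounded_def,
      ← Bornology.isBounded_compl_iff] at hev
    refine hev.subset fun θ hθ ↦ ?_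
    simp only [Set.mem_compl_iff, Set.mem_setOf_eq] at *
    linarith
  have hScomp : IsCompact {θ : Fin n → ℝ | h1 θ + h2 θ ≤ B} :=
    Metric.isCompact_of_isClosed_isBounded hSclosed hSbdd
  -- main: every subsequence has a sub-subsequence converging to θ1star
  apply tendsto_of_subseq_tendsto
  intro ns hns
  have hfreq : ∃ᶠ k in atTop, θhat (ns k) ∈ {θ : Fin n → ℝ | h1 θ + h2 θ ≤ B} :=
    ((hns.eventually hS)).frequently
  obtain ⟨a, _, φ, hφmono, hφlim⟩ := hScomp.tendsto_subseq' hfreq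
  refine ⟨φ, ?_⟩
  have hηφ : Tendsto (fun k => η (ns (φ k))) atTop (𝓝 1) :=
    hηlim.comp (hns.comp hφmono.tendsto_atTop)
  have hmin_a : ∀ v, h1 a ≤ h1 v := by
    intro v
    -- h1 (θhat (ns (φ k))) ≤ h1 v + ((1 - η)/η) * h2 v
    have hle : ∀ k, h1 (θhat (ns (φ k))) ≤
        h1 v + ((1 - η (ns (φ k))) / η (ns (φ k))) * h2 v := by
      intro k
      set m := ns (φ k) with hm
      have hη0 := (hη m).1
      have hη1 := (hη m).2
      have key := hmin m v
      have h2nn := h2nonneg (θhat m)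
      have hq : η m * (((1 - η m) / η m) * h2 v) = (1 - η m) * h2 v := by
        field_simp
      have hmul : η m * h1 (θhat m) ≤ η m * (h1 v + ((1 - η m) / η m) * h2 v) := by
        rw [mul_add, hq]
        nlinarith [mul_nonneg (by linarith : (0:ℝ) ≤ 1 - η m) h2nn]
      exact le_of_mul_le_mul_left hmul hη0
    have hL : Tendsto (fun k => h1 (θhat (ns (φ k)))) atTop (𝓝 (h1 a)) :=
      (hc1.tendsto a).comp hφlim
    have hR : Tendsto (fun k => h1 v + ((1 - η (ns (φ k))) / η (ns (φ k))) * h2 v)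
        atTop (𝓝 (h1 v + ((1 - 1) / 1) * h2 v)) := by
      exact tendsto_const_nhds.add
        (((tendsto_const_nhds.sub hηφ).div hηφ (by norm_num)).mul tendsto_const_nhds)
    have := le_of_tendsto_of_tendsto' hL hR hle
    simpa using this
  have : a = θ1star := hθ1uniq a hmin_a
  subst this
  exact hφlim
end
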